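/- Let A, B ⊆ [m] with A ⊄ B and B ⊄ A, Δ = Δ_A ∪ Δ_B, D = Δ + wΔ ⊆ F_4^m, N = 2^{|A|} + 2^{|B|} − 2^{|A∩B|}, and D^c = (F_4^m \ {0}) \ D. Then the binary subfield code C^{(2)}_{D^c} has length 4^m − N², exactly 4^m distinct codewords (dimension 2m over F_2), and minimum distance 2^{2m−1} − (2^{|A|−1}+2^{|B|−1})·N; moreover, for every (α,β) ≠ (0,0) in F_2^m × F_2^m, wt(c^{(2)}_{D^c}(α,β)) = 2^{2m−1} − wt(c^{(2)}_D(α,β)). -/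
import Mathlib

open Finset

/-- The support of a binary vector, as a finset of coordinates. -/
def supp {m : ℕ} (v : Fin m → ZMod 2) : Finset (Fin m) :=
  Finset.univ.filter (fun i => v i ≠ 0)

/-- The inner product of two binary vectors. -/
def dot2 {m : ℕ} (u v : Fin m → ZMod 2) : ZMod 2 := ∑ i, u i * v i

/-- The simplicial complex generated by `A`: all binary vectors with support contained in `A`. -/
def delta {m : ℕ} (A : Finset (Fin m)) : Finset (Fin m → ZMod 2) :=
  Finset.univ.filter (fun v => supp v ⊆ A)

variable {F : Type} [Field F] [Fintype F] [DecidableEq F]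

/-- The embedding of `F_2 = {0,1}` into a field `F`. -/
def e2 (a : ZMod 2) : F := (a.val : F)

/-- The quaternary vector `d_1 + w·d_2` attached to a pair of binary vectors. -/
def dvec {m : ℕ} (w : F) (p : (Fin m → ZMod 2) × (Fin m → ZMod 2)) : Fin m → F :=
  fun i => e2 (p.1 i) + w * e2 (p.2 i)

/-- The codeword `c^{(2)}_D(α,β) = (α·d_2 + β·(d_1+d_2))_{d = d_1+w·d_2 ∈ D}` of the binary
subfield code, where `π₁, π₂` extract the components of the unique representation
`g = π₁(g) + w·π₂(g)`. -/
def cw2F {m : ℕ} (D : Finset (Fin m → F)) (π₁ π₂ : F → ZMod 2)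
    (α β : Fin m → ZMod 2) : {d // d ∈ D} → ZMod 2 :=
  fun d => dot2 α (fun i => π₂ (d.1 i)) + dot2 β (fun i => π₁ (d.1 i) + π₂ (d.1 i))

/-- The Hamming weight of the codeword `c^{(2)}_D(α,β)`, counted over the index set `D`. -/
def wt2F {m : ℕ} (D : Finset (Fin m → F)) (π₁ π₂ : F → ZMod 2)
    (α β : Fin m → ZMod 2) : ℕ :=
  (D.filter (fun d =>
    dot2 α (fun i => π₂ (d i)) + dot2 β (fun i => π₁ (d i) + π₂ (d i)) ≠ 0)).card

set_option linter.unusedSectionVars false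

/- ## Auxiliary lemmas -/

lemma zmod2_ne_one_iff (x : ZMod 2) : ¬ x = 1 ↔ x = 0 := by revert x; decide
lemma zmod2_ne_zero_iff (x : ZMod 2) : ¬ x = 0 ↔ x = 1 := by revert x; decide

lemma mem_delta {m : ℕ} {A : Finset (Fin m)} {v : Fin m → ZMod 2} :
    v ∈ delta A ↔ ∀ i, v i ≠ 0 → i ∈ A := by
  simp [delta, supp, Finset.subset_iff]

lemma zero_mem_delta {m : ℕ} (A : Finset (Fin m)) : (0 : Fin m → ZMod 2) ∈ delta A :=
  mem_delta.2 (fun _ h => absurd rfl h)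

lemma dot2_add_right {m : ℕ} (u v v' : Fin m → ZMod 2) :
    dot2 u (fun i => v i + v' i) = dot2 u v + dot2 u v' := by
  simp [dot2, mul_add, Finset.sum_add_distrib]

lemma dot2_add_left {m : ℕ} (u u' v : Fin m → ZMod 2) :
    dot2 (u + u') v = dot2 u v + dot2 u' v := by
  simp [dot2, add_mul, Finset.sum_add_distrib]

lemma dot2_zero_left {m : ℕ} (v : Fin m → ZMod 2) : dot2 0 v = 0 := by simp [dot2]

lemma card_delta {m : ℕ} (A : Finset (Fin m)) : (delta A).card = 2 ^ A.card := by
  have h : delta A = Fintype.piFinset (fun i => if i ∈ A then (univ : Finset (ZMod 2)) else {0}) := by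
    ext v
    simp only [mem_delta, Fintype.mem_piFinset]
    constructor
    · intro h i
      by_cases hi : i ∈ A <;> simp [hi]
      by_contra hne; exact hi (h i hne)
    · intro h i hvi
      by_contra hi
      have := h i
      simp [hi] at this
      exact hvi this
  rw [h, Fintype.card_piFinset]
  have : ∀ i, ((if i ∈ A then (univ : Finset (ZMod 2)) else {0})).card = if i ∈ A then 2 else 1 := by
    intro i; by_cases hi : i ∈ A <;> simp [hi]
  simp_rw [this]
  rw [Finset.prod_ite_mem]
  simp [Finset.prod_const]

lemma delta_inter {m : ℕ} (A B : Finset (Fin m)) : delta A ∩ delta B = delta (A ∩ B) := by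
  ext v; simp only [Finset.mem_inter, mem_delta]
  constructor
  · rintro ⟨h1, h2⟩ i hi; exact ⟨h1 i hi, h2 i hi⟩
  · intro h; exact ⟨fun i hi => (h i hi).1, fun i hi => (h i hi).2⟩

lemma count_eq_zero {m : ℕ} {S : Finset (Fin m)} {u : Fin m → ZMod 2}
    (h : ∀ i ∈ S, u i = 0) :
    ((delta S).filter (fun v => dot2 u v = 1)).card = 0 := by
  rw [Finset.card_eq_zero, Finset.filter_eq_empty_iff]
  intro v hv
  have : dot2 u v = 0 := by
    apply Finset.sum_eq_zero
    intro i _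
    by_cases hvi : v i = 0
    · simp [hvi]
    · rw [h i (mem_delta.1 hv i hvi)]; ring
  simp [this]

lemma two_mul_count {m : ℕ} {S : Finset (Fin m)} {u : Fin m → ZMod 2}
    {i0 : Fin m} (hi0S : i0 ∈ S) (hu : u i0 = 1) :
    2 * ((delta S).filter (fun v => dot2 u v = 1)).card = 2 ^ S.card := by
  classical
  set e : Fin m → ZMod 2 := fun j => if j = i0 then 1 else 0 with he
  have hdot : ∀ v : Fin m → ZMod 2, dot2 u (fun i => v i + e i) = dot2 u v + 1 := by
    intro v
    rw [dot2_add_right]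
    congr 1
    simp only [dot2, he]
    rw [Finset.sum_eq_single i0]
    · simp [hu]
    · intro j _ hj; simp [hj]
    · simp
  have hmem : ∀ v ∈ delta S, (fun i => v i + e i) ∈ delta S := by
    intro v hv
    rw [mem_delta]
    intro i hi
    by_cases hii : i = i0
    · exact hii ▸ hi0S
    · apply mem_delta.1 hv i
      simpa [he, hii] using hi
  have hinv : ∀ v : Fin m → ZMod 2, (fun i => (fun j => v j + e j) i + e i) = v := by
    intro v; funext i
    have : e i + e i = 0 := by
      simp only [he]; by_cases hii : i = i0 <;> simp [hii] <;> decide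
    simp only []
    rw [add_assoc, this, add_zero]
  have hbij : ((delta S).filter (fun v => dot2 u v = 1)).card
      = ((delta S).filter (fun v => ¬ dot2 u v = 1)).card := by
    apply Finset.card_bij' (fun v _ => fun i => v i + e i) (fun v _ => fun i => v i + e i)
    · intro v hv
      simp only [Finset.mem_filter] at hv ⊢
      refine ⟨hmem v hv.1, ?_⟩
      rw [hdot, hv.2]
      decide
    · intro v hv
      simp only [Finset.mem_filter] at hv ⊢
      refine ⟨hmem v hv.1, ?_⟩
      rw [hdot]
      rcases (zmod2_ne_one_iff _).1 hv.2 with h0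
      rw [h0]; decide
    · intro v _; exact hinv v
    · intro v _; exact hinv v
  have htot := Finset.card_filter_add_card_filter_not
    (s := delta S) (p := fun v => dot2 u v = 1)
  rw [card_delta S] at htot
  omega

lemma two_mul_count_le {m : ℕ} (S : Finset (Fin m)) (u : Fin m → ZMod 2) :
    2 * ((delta S).filter (fun v => dot2 u v = 1)).card ≤ 2 ^ S.card := by
  by_cases h : ∃ i ∈ S, u i = 1
  · obtain ⟨i0, hi0, hu⟩ := h
    exact le_of_eq (two_mul_count hi0 hu)
  · push_neg at h
    rw [count_eq_zero (fun i hi => (zmod2_ne_one_iff _).1 (h i hi))]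
    positivity

lemma filter_dot2_split {m : ℕ} (s : Finset (Fin m → ZMod 2)) (u : Fin m → ZMod 2) :
    (s.filter (fun v => dot2 u v = 1)).card + (s.filter (fun v => dot2 u v = 0)).card = s.card := by
  have h := Finset.card_filter_add_card_filter_not
    (s := s) (p := fun v => dot2 u v = 1)
  rwa [Finset.filter_congr (fun v _ => zmod2_ne_one_iff (dot2 u v))] at h

lemma card_filter_prod {X Y : Type*} [DecidableEq X] [DecidableEq Y]
    (s : Finset X) (t : Finset Y) (f : X → ZMod 2) (g : Y → ZMod 2) :
    ((s ×ˢ t).filter (fun p => f p.1 + g p.2 = 1)).card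
      = (s.filter (fun x => f x = 0)).card * (t.filter (fun y => g y = 1)).card
      + (s.filter (fun x => f x = 1)).card * (t.filter (fun y => g y = 0)).card := by
  classical
  rw [Finset.card_filter]
  rw [Finset.sum_product]
  have hinner : ∀ x, (∑ y ∈ t, if f x + g y = 1 then (1:ℕ) else 0)
      = if f x = 1 then (t.filter (fun y => g y = 0)).card
        else (t.filter (fun y => g y = 1)).card := by
    intro x
    by_cases hx : f x = 1
    · rw [if_pos hx, Finset.card_filter]
      have hiff : ∀ z : ZMod 2, ((1 + z = 1) ↔ z = 0) := by decide
      apply Finset.sum_congr rfl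
      intro y _
      simp only [hx, hiff]
    · have hx0 : f x = 0 := by
        have : ∀ z : ZMod 2, z ≠ 1 → z = 0 := by decide
        exact this _ hx
      rw [if_neg hx, Finset.card_filter]
      apply Finset.sum_congr rfl
      intro y _
      congr 1
      rw [hx0, zero_add]
  simp_rw [hinner]
  rw [Finset.sum_ite, Finset.sum_const, Finset.sum_const, smul_eq_mul, smul_eq_mul]
  have : Finset.filter (fun x => ¬ f x = 1) s = Finset.filter (fun x => f x = 0) s := by
    apply Finset.filter_congr
    intro x _
    constructor
    · intro h; have : ∀ z : ZMod 2, z ≠ 1 → z = 0 := by decide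
      exact this _ h
    · intro h; rw [h]; decide
  rw [this]
  ring

section PiLemmas

variable {w : F} {π₁ π₂ : F → ZMod 2}
variable (hF : Fintype.card F = 4) (hπ : ∀ g : F, g = e2 (π₁ g) + w * e2 (π₂ g))

include hF hπ

lemma phi_bij : Function.Bijective (fun p : ZMod 2 × ZMod 2 => e2 p.1 + w * e2 p.2) := by
  have hsurj : Function.Surjective (fun p : ZMod 2 × ZMod 2 => e2 p.1 + w * e2 p.2) :=
    fun g => ⟨(π₁ g, π₂ g), (hπ g).symm⟩
  have hcard : Fintype.card (ZMod 2 × ZMod 2) = Fintype.card F := by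
    rw [hF]; simp
  exact (Fintype.bijective_iff_surjective_and_card _).2 ⟨hsurj, hcard⟩

lemma pi_spec (x y : ZMod 2) :
    π₁ (e2 x + w * e2 y) = x ∧ π₂ (e2 x + w * e2 y) = y := by
  have h := hπ (e2 x + w * e2 y)
  have := (phi_bij hF hπ).injective
    (show (fun p : ZMod 2 × ZMod 2 => e2 p.1 + w * e2 p.2)
        (π₁ (e2 x + w * e2 y), π₂ (e2 x + w * e2 y))
      = (fun p : ZMod 2 × ZMod 2 => e2 p.1 + w * e2 p.2) (x, y) from h.symm)
  exact ⟨congrArg Prod.fst this, congrArg Prod.snd this⟩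

lemma dvec_inj {m : ℕ} : Function.Injective (dvec (m := m) w) := by
  intro p q h
  have hcomp : ∀ i, p.1 i = q.1 i ∧ p.2 i = q.2 i := by
    intro i
    have hi := congrFun h i
    simp only [dvec] at hi
    have := (phi_bij hF hπ).injective
      (show (fun p : ZMod 2 × ZMod 2 => e2 p.1 + w * e2 p.2) (p.1 i, p.2 i)
        = (fun p : ZMod 2 × ZMod 2 => e2 p.1 + w * e2 p.2) (q.1 i, q.2 i) from hi)
    exact ⟨congrArg Prod.fst this, congrArg Prod.snd this⟩
  exact Prod.ext (funext fun i => (hcomp i).1) (funext fun i => (hcomp i).2)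

lemma pi_dvec {m : ℕ} (p : (Fin m → ZMod 2) × (Fin m → ZMod 2)) (i : Fin m) :
    π₁ (dvec w p i) = p.1 i ∧ π₂ (dvec w p i) = p.2 i :=
  pi_spec hF hπ (p.1 i) (p.2 i)

lemma dvec_surj {m : ℕ} : Function.Surjective (dvec (m := m) w) := by
  intro g
  exact ⟨(fun i => π₁ (g i), fun i => π₂ (g i)), by funext i; exact (hπ (g i)).symm⟩

lemma pi_zero : π₁ (0 : F) = 0 ∧ π₂ (0 : F) = 0 := by
  have h := pi_spec hF hπ 0 0
  have h0 : e2 (0 : ZMod 2) + w * e2 (0 : ZMod 2) = (0 : F) := by simp [e2]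
  rw [h0] at h
  exact h

lemma card_filter_image_eq {m : ℕ}
    (s : Finset ((Fin m → ZMod 2) × (Fin m → ZMod 2))) (α β : Fin m → ZMod 2) :
    ((s.image (dvec w)).filter (fun dd =>
        dot2 α (fun i => π₂ (dd i)) + dot2 β (fun i => π₁ (dd i) + π₂ (dd i)) ≠ 0)).card
      = (s.filter (fun p => dot2 β p.1 + dot2 (α + β) p.2 = 1)).card := by
  classical
  rw [Finset.filter_image, Finset.card_image_of_injective _ (dvec_inj hF hπ)]
  congr 1
  apply Finset.filter_congr
  intro p _
  rw [show (fun i => π₂ (dvec w p i)) = p.2 from funext fun i => (pi_dvec hF hπ p i).2]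
  rw [show (fun i => π₁ (dvec w p i) + π₂ (dvec w p i)) = (fun i => p.1 i + p.2 i) from
    funext fun i => by rw [(pi_dvec hF hπ p i).1, (pi_dvec hF hπ p i).2]]
  rw [dot2_add_right, dot2_add_left]
  generalize dot2 α p.2 = X
  generalize dot2 β p.1 = Y
  generalize dot2 β p.2 = Z
  revert X Y Z; decide

end PiLemmas

lemma nat_half_eq {c0 c1 c0' c1' S T : ℕ} (h1 : c0 + c1 = S) (h2 : c0' + c1' = S)
    (h3 : 2 * c1 = S ∨ 2 * c1' = S) (h4 : S * S = 2 * T) : c0 * c1' + c1 * c0' = T := by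
  rcases h3 with h3 | h3
  · have hc : c0 = c1 := by omega
    have key : 2 * (c0 * c1' + c1 * c0') = 2 * T := by
      calc 2 * (c0 * c1' + c1 * c0') = (2 * c1) * (c1' + c0') := by rw [hc]; ring
      _ = S * S := by rw [h3]; congr 1; omega
      _ = 2 * T := h4
    omega
  · have hc : c0' = c1' := by omega
    have key : 2 * (c0 * c1' + c1 * c0') = 2 * T := by
      calc 2 * (c0 * c1' + c1 * c0') = (2 * c1') * (c0 + c1) := by rw [hc]; ring
      _ = S * S := by rw [h3, h1]
      _ = 2 * T := h4
    omega

lemma key_ineq {E N t t' : ℤ} (hE : 0 ≤ E) (hN : 0 ≤ N) (ht1 : -N ≤ t) (ht2 : t ≤ E)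
    (ht1' : -N ≤ t') (ht2' : t' ≤ E) : -(E * N) ≤ t * t' := by
  rcases le_or_gt 0 t with h | h
  · nlinarith
  · nlinarith

set_option maxHeartbeats 3000000 in
/-- Proposition 5.6 (length, size, weight relation and minimum distance): for
`Δ = Δ_A ∪ Δ_B` with `A ⊄ B`, `B ⊄ A`, `D = Δ + wΔ`, `N = 2^{|A|}+2^{|B|}−2^{|A∩B|}` and
`D^c = (F_4^m \ {0}) \ D`, the binary subfield code `C^{(2)}_{D^c}` has length `4^m − N²`,
`4^m` codewords, minimum distance `2^{2m−1} − (2^{|A|−1}+2^{|B|−1})N`, and its weights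
satisfy `wt(c^{(2)}_{D^c}(α,β)) = 2^{2m−1} − wt(c^{(2)}_D(α,β))` for `(α,β) ≠ (0,0)`. -/
theorem binary_subfield_complement_two_maximal_elements {m : ℕ} (hm : 1 ≤ m)
    (hF : Fintype.card F = 4) (w : F) (hw : w ^ 2 + w + 1 = 0)
    (π₁ π₂ : F → ZMod 2) (hπ : ∀ g : F, g = e2 (π₁ g) + w * e2 (π₂ g))
    (A B : Finset (Fin m)) (hA : ¬ A ⊆ B) (hB : ¬ B ⊆ A)
    (a b c : ℕ) (ha : a = A.card) (hb : b = B.card) (hc : c = (A ∩ B).card)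
    (d : ℤ) (hd : d = 2 ^ (2 * m - 1)
      - (2 ^ (a - 1) + 2 ^ (b - 1)) * (2 ^ a + 2 ^ b - 2 ^ c)) :
    ((Finset.univ.erase (0 : Fin m → F))
        \ (((delta A ∪ delta B) ×ˢ (delta A ∪ delta B)).image (dvec w))).card
      = 4 ^ m - (2 ^ a + 2 ^ b - 2 ^ c) ^ 2
    ∧ (Finset.univ.image
        (fun ab : (Fin m → ZMod 2) × (Fin m → ZMod 2) =>
          cw2F ((Finset.univ.erase (0 : Fin m → F))
              \ (((delta A ∪ delta B) ×ˢ (delta A ∪ delta B)).image (dvec w)))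
            π₁ π₂ ab.1 ab.2)).card
      = 4 ^ m
    ∧ (∀ α β : Fin m → ZMod 2,
        wt2F ((Finset.univ.erase (0 : Fin m → F))
            \ (((delta A ∪ delta B) ×ˢ (delta A ∪ delta B)).image (dvec w))) π₁ π₂ α β = 0
        ∨ d ≤ (wt2F ((Finset.univ.erase (0 : Fin m → F))
            \ (((delta A ∪ delta B) ×ˢ (delta A ∪ delta B)).image (dvec w))) π₁ π₂ α β : ℤ))
    ∧ (∃ α β : Fin m → ZMod 2,
        (wt2F ((Finset.univ.erase (0 : Fin m → F))
            \ (((delta A ∪ delta B) ×ˢ (delta A ∪ delta B)).image (dvec w))) π₁ π₂ α β : ℤ)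
          = d)
    ∧ (∀ α β : Fin m → ZMod 2, (α, β) ≠ (0, 0) →
        (wt2F ((Finset.univ.erase (0 : Fin m → F))
            \ (((delta A ∪ delta B) ×ˢ (delta A ∪ delta B)).image (dvec w))) π₁ π₂ α β : ℤ)
          = 2 ^ (2 * m - 1)
            - wt2F (((delta A ∪ delta B) ×ˢ (delta A ∪ delta B)).image (dvec w)) π₁ π₂ α β) := by
  classical
  obtain ⟨i, hiA, hiB⟩ := Finset.not_subset.1 hA
  obtain ⟨j, hjB, hjA⟩ := Finset.not_subset.1 hB
  have hij : j ≠ i := fun h => hiB (h ▸ hjB)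
  set Δ : Finset (Fin m → ZMod 2) := delta A ∪ delta B with hΔdef
  set D : Finset (Fin m → F) := (Δ ×ˢ Δ).image (dvec w) with hDdef
  set E : Finset (Fin m → F) := Finset.univ.erase (0 : Fin m → F) with hEdef
  -- basic numeric facts
  have ha1 : 1 ≤ a := by rw [ha]; exact Finset.card_pos.2 ⟨i, hiA⟩
  have hb1 : 1 ≤ b := by rw [hb]; exact Finset.card_pos.2 ⟨j, hjB⟩
  have hca : c < a := by
    rw [ha, hc]
    exact Finset.card_lt_card ((Finset.ssubset_iff_of_subset Finset.inter_subset_left).2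
      ⟨i, hiA, fun hmm => hiB (Finset.mem_inter.1 hmm).2⟩)
  have hcb : c < b := by
    rw [hb, hc]
    exact Finset.card_lt_card ((Finset.ssubset_iff_of_subset Finset.inter_subset_right).2
      ⟨j, hjB, fun hmm => hjA (Finset.mem_inter.1 hmm).1⟩)
  have ham : a < m := by
    rw [ha]
    have := (Finset.card_lt_iff_ne_univ A).2 (fun h => hjA (h ▸ Finset.mem_univ j))
    simpa using this
  have hbm : b < m := by
    rw [hb]
    have := (Finset.card_lt_iff_ne_univ B).2 (fun h => hiB (h ▸ Finset.mem_univ i))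
    simpa using this
  have hNN : Δ.card + 2 ^ c = 2 ^ a + 2 ^ b := by
    rw [hΔdef]
    have h := Finset.card_union_add_card_inter (delta A) (delta B)
    rw [delta_inter, card_delta, card_delta, card_delta, ← ha, ← hb, ← hc] at h
    exact h
  have hmpow : (2:ℕ) ^ m = 2 * 2 ^ (m - 1) := by
    conv_lhs => rw [show m = (m - 1) + 1 from by omega]
    rw [pow_succ]; ring
  have h2a : (2:ℕ) ^ a ≤ 2 ^ (m - 1) := Nat.pow_le_pow_right (by norm_num) (by omega)
  have h2b : (2:ℕ) ^ b ≤ 2 ^ (m - 1) := Nat.pow_le_pow_right (by norm_num) (by omega)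
  have h2c1 : (1:ℕ) ≤ 2 ^ c := Nat.one_le_two_pow
  have hΔpos : 1 ≤ Δ.card :=
    Finset.card_pos.2 ⟨0, Finset.mem_union_left _ (zero_mem_delta A)⟩
  have hΔle : Δ.card ≤ 2 ^ m - 1 := by omega
  -- counts over Δ
  have hsplitΔ : ∀ u : Fin m → ZMod 2,
      (Δ.filter (fun v => dot2 u v = 1)).card + (Δ.filter (fun v => dot2 u v = 0)).card
        = Δ.card := fun u => filter_dot2_split Δ u
  have h2n1 : ∀ u : Fin m → ZMod 2,
      2 * (Δ.filter (fun v => dot2 u v = 1)).card ≤ 2 ^ a + 2 ^ b := by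
    intro u
    have hle : (Δ.filter (fun v => dot2 u v = 1)).card
        ≤ ((delta A).filter (fun v => dot2 u v = 1)).card
          + ((delta B).filter (fun v => dot2 u v = 1)).card := by
      rw [hΔdef, Finset.filter_union]; exact Finset.card_union_le _ _
    have hA2 := two_mul_count_le A u
    have hB2 := two_mul_count_le B u
    rw [← ha] at hA2
    rw [← hb] at hB2
    omega
  -- weight over D as a product count
  have hwtD : ∀ α β : Fin m → ZMod 2, wt2F D π₁ π₂ α β
      = (Δ.filter (fun v => dot2 β v = 0)).card * (Δ.filter (fun v => dot2 (α + β) v = 1)).card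
      + (Δ.filter (fun v => dot2 β v = 1)).card * (Δ.filter (fun v => dot2 (α + β) v = 0)).card := by
    intro α β
    rw [hDdef]
    unfold wt2F
    rw [card_filter_image_eq hF hπ]
    exact card_filter_prod Δ Δ _ _
  -- weights over E
  have huu : (Finset.univ : Finset (Fin m → ZMod 2)) = delta Finset.univ := by
    ext v; simp [mem_delta]
  have hcardU : (Finset.univ : Finset (Fin m → ZMod 2)).card = 2 ^ m := by
    rw [huu, card_delta]; simp
  have hcU1 : ∀ u : Fin m → ZMod 2, u ≠ 0 →
      2 * ((Finset.univ : Finset (Fin m → ZMod 2)).filter (fun v => dot2 u v = 1)).card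
        = 2 ^ m := by
    intro u hu
    obtain ⟨i0, hi0⟩ : ∃ i0, u i0 = 1 := by
      by_contra hcon; push_neg at hcon
      exact hu (funext fun k => (zmod2_ne_one_iff _).1 (hcon k))
    have h := two_mul_count (S := (Finset.univ : Finset (Fin m))) (Finset.mem_univ i0) hi0
    rw [← huu] at h
    simpa using h
  have hP0 : ∀ α β : Fin m → ZMod 2,
      ¬ (dot2 α (fun i => π₂ ((0 : Fin m → F) i))
          + dot2 β (fun i => π₁ ((0 : Fin m → F) i) + π₂ ((0 : Fin m → F) i)) ≠ 0) := by
    intro α β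
    have h1 := (pi_zero hF hπ).1
    have h2 := (pi_zero hF hπ).2
    simp [h1, h2, dot2]
  have hwtE : ∀ α β : Fin m → ZMod 2, wt2F E π₁ π₂ α β
      = ((Finset.univ ×ˢ Finset.univ :
            Finset ((Fin m → ZMod 2) × (Fin m → ZMod 2))).filter
          (fun p => dot2 β p.1 + dot2 (α + β) p.2 = 1)).card := by
    intro α β
    rw [hEdef]
    unfold wt2F
    rw [Finset.filter_erase]
    have herase : (0 : Fin m → F) ∉ (Finset.univ : Finset (Fin m → F)).filter (fun dd =>
        dot2 α (fun i => π₂ (dd i)) + dot2 β (fun i => π₁ (dd i) + π₂ (dd i)) ≠ 0) :=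
      fun hmem => (hP0 α β) (Finset.mem_filter.1 hmem).2
    rw [Finset.erase_eq_of_notMem herase]
    have himg : ((Finset.univ ×ˢ Finset.univ :
          Finset ((Fin m → ZMod 2) × (Fin m → ZMod 2))).image (dvec w)) = Finset.univ := by
      rw [Finset.univ_product_univ]
      exact Finset.image_univ_of_surjective (dvec_surj hF hπ)
    rw [← himg, card_filter_image_eq hF hπ]
  have hwtEval : ∀ α β : Fin m → ZMod 2, (α, β) ≠ (0, 0) →
      wt2F E π₁ π₂ α β = 2 ^ (2 * m - 1) := by
    intro α β hne
    rw [hwtE α β]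
    rw [card_filter_prod]
    have hβγ : β ≠ 0 ∨ α + β ≠ 0 := by
      by_contra hcon; push_neg at hcon
      obtain ⟨h1, h2⟩ := hcon
      rw [h1, add_zero] at h2
      exact hne (by rw [h1, h2])
    have hsq : 2 ^ m * 2 ^ m = 2 * 2 ^ (2 * m - 1) := by
      rw [← pow_add]
      conv_lhs => rw [show m + m = (2 * m - 1) + 1 from by omega]
      rw [pow_succ]; ring
    have hs1 := filter_dot2_split (Finset.univ : Finset (Fin m → ZMod 2)) β
    have hs2 := filter_dot2_split (Finset.univ : Finset (Fin m → ZMod 2)) (α + β)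
    rw [hcardU] at hs1 hs2
    rcases hβγ with hβ | hγ
    · exact nat_half_eq (by omega) (by omega) (Or.inl (hcU1 β hβ)) hsq
    · exact nat_half_eq (by omega) (by omega) (Or.inr (hcU1 (α + β) hγ)) hsq
  -- 0 ∈ D
  have hD0 : (0 : Fin m → F) ∈ D := by
    rw [hDdef]
    refine Finset.mem_image.2 ⟨(0, 0), ?_, ?_⟩
    · exact Finset.mem_product.2
        ⟨Finset.mem_union_left _ (zero_mem_delta A), Finset.mem_union_left _ (zero_mem_delta A)⟩
    · funext k; simp [dvec, e2]
  -- sdiff relation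
  have hwt_sub : ∀ α β : Fin m → ZMod 2,
      wt2F D π₁ π₂ α β ≤ wt2F E π₁ π₂ α β ∧
      wt2F (E \ D) π₁ π₂ α β = wt2F E π₁ π₂ α β - wt2F D π₁ π₂ α β := by
    intro α β
    have hfsub : D.filter (fun dd =>
          dot2 α (fun i => π₂ (dd i)) + dot2 β (fun i => π₁ (dd i) + π₂ (dd i)) ≠ 0)
        ⊆ E.filter (fun dd =>
          dot2 α (fun i => π₂ (dd i)) + dot2 β (fun i => π₁ (dd i) + π₂ (dd i)) ≠ 0) := by
      intro x hx
      rcases Finset.mem_filter.1 hx with ⟨hxD, hxP⟩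
      refine Finset.mem_filter.2 ⟨?_, hxP⟩
      rw [hEdef]
      refine Finset.mem_erase.2 ⟨?_, Finset.mem_univ x⟩
      rintro rfl
      exact hP0 α β hxP
    constructor
    · exact Finset.card_le_card hfsub
    · have hsplit : (E \ D).filter (fun dd =>
            dot2 α (fun i => π₂ (dd i)) + dot2 β (fun i => π₁ (dd i) + π₂ (dd i)) ≠ 0)
          = E.filter (fun dd =>
            dot2 α (fun i => π₂ (dd i)) + dot2 β (fun i => π₁ (dd i) + π₂ (dd i)) ≠ 0)
            \ D.filter (fun dd =>
            dot2 α (fun i => π₂ (dd i)) + dot2 β (fun i => π₁ (dd i) + π₂ (dd i)) ≠ 0) := by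
        ext x
        simp only [Finset.mem_filter, Finset.mem_sdiff]
        tauto
      unfold wt2F
      rw [hsplit, Finset.card_sdiff_of_subset hfsub]
  -- integer facts
  have hNZ : ((Δ.card : ℤ)) = 2 ^ a + 2 ^ b - 2 ^ c := by
    have h := congrArg (Nat.cast : ℕ → ℤ) hNN
    push_cast at h
    linarith
  have h2d : 2 * d = 2 ^ (2 * m) - (2 ^ a + 2 ^ b) * (Δ.card : ℤ) := by
    rw [hd, ← hNZ]
    have e1 : (2:ℤ) ^ (2 * m) = 2 * 2 ^ (2 * m - 1) := by
      conv_lhs => rw [show 2 * m = (2 * m - 1) + 1 from by omega]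
      rw [pow_succ]; ring
    have he2a : (2:ℤ) ^ a = 2 * 2 ^ (a - 1) := by
      conv_lhs => rw [show a = (a - 1) + 1 from by omega]
      rw [pow_succ]; ring
    have he2b : (2:ℤ) ^ b = 2 * 2 ^ (b - 1) := by
      conv_lhs => rw [show b = (b - 1) + 1 from by omega]
      rw [pow_succ]; ring
    rw [e1, he2a, he2b]
    ring
  have h2pow : (2:ℤ) * 2 ^ (2 * m - 1) = 2 ^ (2 * m) := by
    conv_rhs => rw [show 2 * m = (2 * m - 1) + 1 from by omega]
    rw [pow_succ]; ring
  have hwD2 : ∀ α β : Fin m → ZMod 2,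
      2 * (wt2F D π₁ π₂ α β : ℤ) ≤ (2 ^ a + 2 ^ b) * (Δ.card : ℤ) := by
    intro α β
    rw [hwtD α β]
    obtain ⟨p1, hp1d⟩ : ∃ x, (Δ.filter (fun v => dot2 β v = 1)).card = x := ⟨_, rfl⟩
    obtain ⟨p0, hp0d⟩ : ∃ x, (Δ.filter (fun v => dot2 β v = 0)).card = x := ⟨_, rfl⟩
    obtain ⟨q1, hq1d⟩ : ∃ x, (Δ.filter (fun v => dot2 (α + β) v = 1)).card = x := ⟨_, rfl⟩
    obtain ⟨q0, hq0d⟩ : ∃ x, (Δ.filter (fun v => dot2 (α + β) v = 0)).card = x := ⟨_, rfl⟩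
    obtain ⟨N, hNd⟩ : ∃ x, Δ.card = x := ⟨_, rfl⟩
    have hs1 := hsplitΔ β
    have hs2 := hsplitΔ (α + β)
    have hb1' := h2n1 β
    have hb2' := h2n1 (α + β)
    have hNZ' := hNZ
    rw [hp1d, hp0d, hNd] at hs1
    rw [hq1d, hq0d, hNd] at hs2
    rw [hp1d] at hb1'
    rw [hq1d] at hb2'
    rw [hNd] at hNZ'
    rw [hp1d, hp0d, hq1d, hq0d, hNd]
    have hcast1 : (p1 : ℤ) + p0 = N := by exact_mod_cast hs1
    have hcast2 : (q1 : ℤ) + q0 = N := by exact_mod_cast hs2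
    have hcb1 : 2 * (p1 : ℤ) ≤ 2 ^ a + 2 ^ b := by exact_mod_cast hb1'
    have hcb2 : 2 * (q1 : ℤ) ≤ 2 ^ a + 2 ^ b := by exact_mod_cast hb2'
    have hp1nn : (0:ℤ) ≤ (p1 : ℤ) := Int.natCast_nonneg _
    have hq1nn : (0:ℤ) ≤ (q1 : ℤ) := Int.natCast_nonneg _
    have hNnn : (0:ℤ) ≤ (N : ℤ) := Int.natCast_nonneg _
    have hEnn : (0:ℤ) ≤ (2:ℤ) ^ c := by positivity
    have hkey := key_ineq (E := (2:ℤ)^c) (N := (N : ℤ))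
      (t := 2*(p1:ℤ) - N) (t' := 2*(q1:ℤ) - N)
      hEnn hNnn (by linarith) (by linarith) (by linarith) (by linarith)
    have hident : 2 * ((p0:ℤ) * q1 + (p1:ℤ) * q0)
        = (N:ℤ)^2 - (2*(p1:ℤ) - N) * (2*(q1:ℤ) - N) := by
      have hp0z : (p0:ℤ) = N - p1 := by linarith
      have hq0z : (q0:ℤ) = N - q1 := by linarith
      rw [hp0z, hq0z]; ring
    have hrhs : ((2:ℤ)^a + 2^b) * (N:ℤ) = (N:ℤ)^2 + 2^c * (N:ℤ) := by
      rw [show ((2:ℤ)^a + 2^b) = (N:ℤ) + 2^c from by linarith]; ring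
    push_cast
    linarith
  have hdposN : 0 < d := by
    have hSab : (2:ℤ)^a + 2^b ≤ 2^m := by
      have c1 : ((2:ℕ)^a + 2^b : ℤ) ≤ ((2:ℕ)^m : ℤ) := by exact_mod_cast (by omega : (2:ℕ)^a + 2^b ≤ 2^m)
      push_cast at c1
      exact c1
    have hNle' : (Δ.card : ℤ) ≤ 2^m - 1 := by
      have : (2:ℤ)^c ≥ 1 := by exact_mod_cast h2c1
      linarith [hNZ, hSab]
    have hNnn : (0:ℤ) ≤ (Δ.card : ℤ) := Int.natCast_nonneg _
    have h2m2 : (2:ℤ)^(2*m) = 2^m * 2^m := by rw [two_mul, pow_add]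
    have hpm : (0:ℤ) < 2^m := by positivity
    nlinarith [h2d, mul_le_mul_of_nonneg_right hSab hNnn,
      mul_le_mul_of_nonneg_left hNle' (le_of_lt hpm)]
  have hlb : ∀ α β : Fin m → ZMod 2, (α, β) ≠ (0, 0) →
      (wt2F (E \ D) π₁ π₂ α β : ℤ) = 2 ^ (2*m - 1) - wt2F D π₁ π₂ α β
      ∧ d ≤ (wt2F (E \ D) π₁ π₂ α β : ℤ) := by
    intro α β hne
    obtain ⟨hle, heq⟩ := hwt_sub α β
    have heqz : (wt2F (E \ D) π₁ π₂ α β : ℤ)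
        = (wt2F E π₁ π₂ α β : ℤ) - wt2F D π₁ π₂ α β := by
      rw [heq, Nat.cast_sub hle]
    rw [hwtEval α β hne] at heqz
    push_cast at heqz
    refine ⟨heqz, ?_⟩
    have hw2 := hwD2 α β
    rw [heqz]
    linarith [h2d, h2pow]
  refine ⟨?_, ?_, ?_, ?_, ?_⟩
  · -- length
    have hcardD : D.card = Δ.card * Δ.card := by
      rw [hDdef, Finset.card_image_of_injective _ (dvec_inj hF hπ), Finset.card_product]
    have hcardE : E.card = 4 ^ m - 1 := by
      rw [hEdef, Finset.card_erase_of_mem (Finset.mem_univ _), Finset.card_univ]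
      congr 1
      rw [Fintype.card_fun]
      simp [hF]
    have hED : E ∩ D = D.erase 0 := by
      rw [hEdef]; ext x
      simp only [Finset.mem_inter, Finset.mem_erase, Finset.mem_univ, and_true]
    have hcardED : (E ∩ D).card = Δ.card * Δ.card - 1 := by
      rw [hED, Finset.card_erase_of_mem hD0, hcardD]
    have hcardDc : (E \ D).card = E.card - (E ∩ D).card := by
      conv_lhs => rw [← Finset.sdiff_inter_self_left E D]
      exact Finset.card_sdiff_of_subset Finset.inter_subset_left
    have hNle : Δ.card ≤ 2 ^ m := by omega
    have h4m : (4:ℕ) ^ m = 2 ^ m * 2 ^ m := by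
      rw [show (4:ℕ) = 2*2 from rfl, mul_pow]
    have hsqle : Δ.card * Δ.card ≤ 4 ^ m := by
      rw [h4m]; exact Nat.mul_le_mul hNle hNle
    have hsq1 : 1 ≤ Δ.card * Δ.card := by
      have := Nat.mul_le_mul hΔpos hΔpos; simpa using this
    have hgoalN : (2 ^ a + 2 ^ b - 2 ^ c : ℕ) = Δ.card := by omega
    rw [hgoalN, pow_two]
    omega
  · -- number of codewords
    have hinj : Function.Injective (fun ab : (Fin m → ZMod 2) × (Fin m → ZMod 2) =>
        cw2F (E \ D) π₁ π₂ ab.1 ab.2) := by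
      intro p q hpq
      simp only at hpq
      by_contra hne
      have hne' : (p.1 + q.1, p.2 + q.2) ≠ ((0:Fin m → ZMod 2), (0:Fin m → ZMod 2)) := by
        intro hzz
        apply hne
        have h1 : p.1 + q.1 = 0 := congrArg Prod.fst hzz
        have h2 : p.2 + q.2 = 0 := congrArg Prod.snd hzz
        have hzz2 : ∀ z z' : ZMod 2, z + z' = 0 → z = z' := by decide
        exact Prod.ext (funext fun k => hzz2 _ _ (congrFun h1 k))
          (funext fun k => hzz2 _ _ (congrFun h2 k))
      have hzero : wt2F (E \ D) π₁ π₂ (p.1 + q.1) (p.2 + q.2) = 0 := by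
        unfold wt2F
        rw [Finset.card_eq_zero, Finset.filter_eq_empty_iff]
        intro x hx
        have hcw := congrFun hpq ⟨x, hx⟩
        simp only [cw2F] at hcw
        simp only [ne_eq, not_not]
        rw [dot2_add_left, dot2_add_left]
        revert hcw
        generalize dot2 p.1 (fun i => π₂ (x i)) = X1
        generalize dot2 q.1 (fun i => π₂ (x i)) = X2
        generalize dot2 p.2 (fun i => π₁ (x i) + π₂ (x i)) = Y1
        generalize dot2 q.2 (fun i => π₁ (x i) + π₂ (x i)) = Y2
        revert X1 X2 Y1 Y2
        decide
      have hcon := (hlb _ _ hne').2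
      rw [hzero] at hcon
      push_cast at hcon
      linarith
    rw [Finset.card_image_of_injective _ hinj, Finset.card_univ]
    rw [Fintype.card_prod, Fintype.card_fun]
    simp only [Fintype.card_fin]
    rw [show Fintype.card (ZMod 2) = 2 from rfl]
    rw [show (4:ℕ) = 2*2 from rfl, mul_pow]
  · -- lower bound on weights
    intro α β
    by_cases hzz : (α, β) = ((0:Fin m → ZMod 2), (0:Fin m → ZMod 2))
    · left
      have h1 : α = 0 := congrArg Prod.fst hzz
      have h2 : β = 0 := congrArg Prod.snd hzz
      rw [h1, h2]
      unfold wt2F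
      rw [Finset.card_eq_zero, Finset.filter_eq_empty_iff]
      intro x hx
      simp [dot2_zero_left]
    · right; exact (hlb α β hzz).2
  · -- existence of minimum-weight codeword
    set β₀ : Fin m → ZMod 2 := fun k => if k = i then 1 else if k = j then 1 else 0 with hβ₀d
    refine ⟨β₀, β₀, ?_⟩
    have hβ0i : β₀ i = 1 := by simp [hβ₀d]
    have hβ0j : β₀ j = 1 := by simp [hβ₀d, hij]
    have hβ0ne : (β₀, β₀) ≠ ((0:Fin m → ZMod 2), 0) := by
      intro h
      have h' : β₀ i = 0 := by simpa using congrFun (congrArg Prod.fst h) i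
      rw [hβ0i] at h'
      exact one_ne_zero h'
    have hadd : β₀ + β₀ = 0 := by
      funext k
      have hz : ∀ z : ZMod 2, z + z = 0 := by decide
      exact hz _
    have hc1β : 2 * (Δ.filter (fun v => dot2 β₀ v = 1)).card = 2 ^ a + 2 ^ b := by
      have hsplit : (Δ.filter (fun v => dot2 β₀ v = 1)).card
          + ((delta (A ∩ B)).filter (fun v => dot2 β₀ v = 1)).card
          = ((delta A).filter (fun v => dot2 β₀ v = 1)).card
          + ((delta B).filter (fun v => dot2 β₀ v = 1)).card := by
        rw [hΔdef, Finset.filter_union]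
        have h := Finset.card_union_add_card_inter
          ((delta A).filter (fun v => dot2 β₀ v = 1))
          ((delta B).filter (fun v => dot2 β₀ v = 1))
        rw [← Finset.filter_inter_distrib, delta_inter] at h
        exact h
      have hI : ((delta (A ∩ B)).filter (fun v => dot2 β₀ v = 1)).card = 0 := by
        apply count_eq_zero
        intro k hk
        rcases Finset.mem_inter.1 hk with ⟨hkA, hkB⟩
        have hki : k ≠ i := fun h => hiB (h ▸ hkB)
        have hkj : k ≠ j := fun h => hjA (h ▸ hkA)
        simp [hβ₀d, hki, hkj]
      have hA2 := two_mul_count hiA hβ0i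
      have hB2 := two_mul_count hjB hβ0j
      rw [← ha] at hA2
      rw [← hb] at hB2
      omega
    have hwtDval : 2 * (wt2F D π₁ π₂ β₀ β₀ : ℤ) = (2 ^ a + 2 ^ b) * (Δ.card : ℤ) := by
      rw [hwtD β₀ β₀, hadd]
      have hz1 : (Δ.filter (fun v => dot2 (0 : Fin m → ZMod 2) v = 1)).card = 0 := by
        rw [Finset.card_eq_zero, Finset.filter_eq_empty_iff]
        intro v _
        rw [dot2_zero_left]
        decide
      have hz0 : (Δ.filter (fun v => dot2 (0 : Fin m → ZMod 2) v = 0)).card = Δ.card := by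
        congr 1
        apply Finset.filter_true_of_mem
        intro v _
        rw [dot2_zero_left]
      rw [hz1, hz0]
      have hz := congrArg (Nat.cast : ℕ → ℤ) hc1β
      push_cast at hz ⊢
      nlinarith [hz]
    have heqz := (hlb β₀ β₀ hβ0ne).1
    rw [heqz]
    linarith [h2d, h2pow, hwtDval]
  · -- complement weight relation
    intro α β hne
    exact (hlb α β hne).1
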